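/- arXiv:2404.16778 — 4 statements merged into one kernel-verified Lean document; each statement's English description precedes it below -/
import Mathlib

section
/- The suffix property—the set of traces σ over AP = {p} such that σ^k = σ for some k > 0, where σ^k denotes the suffix of σ starting at position k—is not an ω-regular language of infinite words over 2^{AP}. -/
/-- A nondeterministic Büchi automaton over the alphabet `A` with state space `Q`. -/
structure NBA (A : Type) (Q : Type) where
  init : Set Q
  trans : Q → A → Set Q
  acc : Set Q

/-- Acceptance for NBA: there is a run visiting accepting states infinitely often. -/
def NBA.Accepts {A Q : Type} (M : NBA A Q) (w : ℕ → A) : Prop :=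
  ∃ ρ : ℕ → Q, ρ 0 ∈ M.init ∧ (∀ i, ρ (i + 1) ∈ M.trans (ρ i) (w i)) ∧
    {i | ρ i ∈ M.acc}.Infinite

/-- A language of infinite words is ω-regular if it is accepted by some NBA with finitely
many states. -/
def OmegaRegular {A : Type} (L : Set (ℕ → A)) : Prop :=
  ∃ (Q : Type) (_ : Fintype Q) (M : NBA A Q), ∀ w, M.Accepts w ↔ w ∈ L

namespace SuffixAux

abbrev Al : Type := Set (Fin 1)

def zz : Al := ∅
def oo : Al := Set.univ

lemma zz_ne_oo : zz ≠ oo := by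
  intro h
  have h0 : (0 : Fin 1) ∈ oo := Set.mem_univ _
  rw [← h] at h0
  exact Set.notMem_empty _ h0

/-- the word `(0^k 1)^ω` -/
def wd (k : ℕ) : ℕ → Al := fun i => if (i + 1) % (k + 1) = 0 then oo else zz

lemma wd_period (k i : ℕ) : wd k (i + (k + 1)) = wd k i := by
  unfold wd
  rw [show i + (k + 1) + 1 = (i + 1) + (k + 1) by ring, Nat.add_mod_right]

lemma eq_of_mod_eq {σ : ℕ → Al} {p : ℕ} (hp : 0 < p) (h : ∀ i, σ (i + p) = σ i) :
    ∀ n, σ n = σ (n % p) := by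
  intro n
  induction n using Nat.strong_induction_on with
  | _ n ih =>
    rcases lt_or_ge n p with h1 | h1
    · rw [Nat.mod_eq_of_lt h1]
    · have h2 : σ ((n - p) + p) = σ (n - p) := h (n - p)
      rw [Nat.sub_add_cancel h1] at h2
      have h3 : (n - p) % p = n % p := by
        conv_rhs => rw [← Nat.sub_add_cancel h1]
        rw [Nat.add_mod_right]
      rw [h2, ih (n - p) (by omega), h3]

lemma exists_infinite_fiber {α β : Type*} [Finite β] (f : α → β) (s : Set α)
    (hs : s.Infinite) : ∃ b, {a | a ∈ s ∧ f a = b}.Infinite := by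
  by_contra h
  push_neg at h
  exact hs ((Set.finite_iUnion h).subset
    (fun a ha => Set.mem_iUnion.2 ⟨f a, ha, rfl⟩))

section Stitch

variable (I J : ℕ → ℕ)

/-- cumulative offsets of the stitched word -/
def Sf : ℕ → ℕ
  | 0 => I 0
  | t + 1 => Sf t + (J t - I t)

/-- which chunk a position belongs to -/
def Tf (n : ℕ) : ℕ := Nat.findGreatest (fun t => Sf I J t ≤ n) n

variable (ks : ℕ → ℕ)

/-- the stitched word -/
def sWord (n : ℕ) : Al :=
  if n < Sf I J 0 then wd (ks 0) n
  else wd (ks (Tf I J n)) (I (Tf I J n) + (n - Sf I J (Tf I J n)))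

variable {Q : Type} (R : ℕ → ℕ → Q)

/-- the stitched run -/
def sRun (n : ℕ) : Q :=
  if n < Sf I J 0 then R 0 n
  else R (Tf I J n) (I (Tf I J n) + (n - Sf I J (Tf I J n)))

variable {I J}

lemma Sf_mono (hIJ : ∀ t, I t < J t) : StrictMono (Sf I J) := by
  apply strictMono_nat_of_lt_succ
  intro t
  have := hIJ t
  show Sf I J t < Sf I J t + (J t - I t)
  omega

lemma Sf_le_self (hIJ : ∀ t, I t < J t) (t : ℕ) : t ≤ Sf I J t :=
  (Sf_mono hIJ).le_apply

lemma Tf_eq (hIJ : ∀ t, I t < J t) {t n : ℕ} (h1 : Sf I J t ≤ n) (h2 : n < Sf I J (t + 1)) :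
    Tf I J n = t := by
  refine le_antisymm ?_ (Nat.le_findGreatest (le_trans (Sf_le_self hIJ t) h1) h1)
  by_contra hc
  push_neg at hc
  have h3 : Sf I J (t + 1) ≤ Sf I J (Tf I J n) := (Sf_mono hIJ).monotone hc
  have h4 : Sf I J (Tf I J n) ≤ n :=
    Nat.findGreatest_spec (P := fun t => Sf I J t ≤ n) (m := t) (n := n)
      (le_trans (Sf_le_self hIJ t) h1) h1
  omega

lemma Tf_bracket (hIJ : ∀ t, I t < J t) {n : ℕ} (h0 : Sf I J 0 ≤ n) :
    Sf I J (Tf I J n) ≤ n ∧ n < Sf I J (Tf I J n + 1) := by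
  have h1 : Sf I J (Tf I J n) ≤ n :=
    Nat.findGreatest_spec (P := fun t => Sf I J t ≤ n) (m := 0) (n := n)
      (le_trans (Sf_le_self hIJ 0) h0) h0
  refine ⟨h1, ?_⟩
  by_contra hc
  push_neg at hc
  exact Nat.findGreatest_is_greatest (P := fun t => Sf I J t ≤ n) (n := n)
    (k := Tf I J n + 1) (Nat.lt_succ_self _) (le_trans (Sf_le_self hIJ _) hc) hc

lemma sWord_eval (hIJ : ∀ t, I t < J t) (t d : ℕ) (hd : d < J t - I t) :
    sWord I J ks (Sf I J t + d) = wd (ks t) (I t + d) := by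
  have hb2 : Sf I J t + d < Sf I J (t + 1) := by
    show Sf I J t + d < Sf I J t + (J t - I t); omega
  have hT : Tf I J (Sf I J t + d) = t := Tf_eq hIJ (Nat.le_add_right _ _) hb2
  have hnot : ¬ (Sf I J t + d < Sf I J 0) := by
    have := (Sf_mono hIJ).monotone (Nat.zero_le t)
    omega
  unfold sWord
  rw [if_neg hnot, hT, Nat.add_sub_cancel_left]

lemma sRun_eval {R : ℕ → ℕ → Q} (hIJ : ∀ t, I t < J t) (t d : ℕ) (hd : d < J t - I t) :
    sRun I J R (Sf I J t + d) = R t (I t + d) := by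
  have hb2 : Sf I J t + d < Sf I J (t + 1) := by
    show Sf I J t + d < Sf I J t + (J t - I t); omega
  have hT : Tf I J (Sf I J t + d) = t := Tf_eq hIJ (Nat.le_add_right _ _) hb2
  have hnot : ¬ (Sf I J t + d < Sf I J 0) := by
    have := (Sf_mono hIJ).monotone (Nat.zero_le t)
    omega
  unfold sRun
  rw [if_neg hnot, hT, Nat.add_sub_cancel_left]

lemma sRun_zero {R : ℕ → ℕ → Q} (hIJ : ∀ t, I t < J t) : sRun I J R 0 = R 0 0 := by
  unfold sRun
  rcases Nat.eq_zero_or_pos (Sf I J 0) with h | h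
  · have hb2 : (0 : ℕ) < Sf I J (0 + 1) := by
      show (0:ℕ) < Sf I J 0 + (J 0 - I 0)
      have := hIJ 0; omega
    have hT : Tf I J 0 = 0 := Tf_eq hIJ (by omega) hb2
    rw [if_neg (by omega), hT, h]
    have hI0 : I 0 = 0 := h
    simp [hI0]
  · rw [if_pos h]

lemma sRun_trans {Q : Type} {M : NBA Al Q} {q : Q} {R : ℕ → ℕ → Q}
    (hIJ : ∀ t, I t < J t)
    (htrans : ∀ t n, R t (n + 1) ∈ M.trans (R t n) (wd (ks t) n))
    (hRI : ∀ t, R t (I t) = q) (hRJ : ∀ t, R t (J t) = q) (n : ℕ) :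
    sRun I J R (n + 1) ∈ M.trans (sRun I J R n) (sWord I J ks n) := by
  rcases lt_or_ge n (Sf I J 0) with hn | hn
  · -- n in prefix
    have hσ : sWord I J ks n = wd (ks 0) n := by unfold sWord; rw [if_pos hn]
    have hρ : sRun I J R n = R 0 n := by unfold sRun; rw [if_pos hn]
    have hρ1 : sRun I J R (n + 1) = R 0 (n + 1) := by
      rcases lt_or_ge (n + 1) (Sf I J 0) with h1 | h1
      · unfold sRun; rw [if_pos h1]
      · -- n + 1 = Sf I J 0 = I 0
        have heq : n + 1 = Sf I J 0 := by omega
        have hb2 : n + 1 < Sf I J (0 + 1) := by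
          show n + 1 < Sf I J 0 + (J 0 - I 0)
          have := hIJ 0; omega
        have hT : Tf I J (n + 1) = 0 := Tf_eq hIJ h1 hb2
        unfold sRun
        rw [if_neg (by omega), hT, heq]
        have : Sf I J 0 = I 0 := rfl
        rw [this, Nat.sub_self, Nat.add_zero]
    rw [hσ, hρ, hρ1]
    exact htrans 0 n
  · -- n in chunk t
    obtain ⟨hb1, hb2⟩ := Tf_bracket hIJ hn
    set t := Tf I J n with ht
    have hσ : sWord I J ks n = wd (ks t) (I t + (n - Sf I J t)) := by
      unfold sWord; rw [if_neg (by omega), ← ht]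
    have hρ : sRun I J R n = R t (I t + (n - Sf I J t)) := by
      unfold sRun; rw [if_neg (by omega), ← ht]
    have hρ1 : sRun I J R (n + 1) = R t (I t + (n - Sf I J t) + 1) := by
      rcases lt_or_ge (n + 1) (Sf I J (t + 1)) with h1 | h1
      · have hT : Tf I J (n + 1) = t := Tf_eq hIJ (by omega) h1
        unfold sRun
        rw [if_neg (by omega), hT]
        congr 1
        omega
      · -- n + 1 = Sf I J (t+1)
        have heq : n + 1 = Sf I J (t + 1) := by omega
        have hb2' : n + 1 < Sf I J (t + 2) := by
          show n + 1 < Sf I J (t + 1) + (J (t+1) - I (t+1))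
          have := hIJ (t + 1); omega
        have hT : Tf I J (n + 1) = t + 1 := Tf_eq hIJ (by omega) hb2'
        unfold sRun
        rw [if_neg (by omega), hT, heq, Nat.sub_self]
        simp only [Nat.add_zero]
        rw [hRI (t + 1)]
        have hL : Sf I J (t + 1) = Sf I J t + (J t - I t) := rfl
        have harg : I t + (n - Sf I J t) + 1 = J t := by
          have := hIJ t; omega
        rw [harg, hRJ t]
    rw [hσ, hρ, hρ1]
    exact htrans t (I t + (n - Sf I J t))

end Stitch

end SuffixAux

open SuffixAux in
/-- the suffix property over `AP = {p}` — the set of traces `σ` such that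
`σ^k = σ` for some `k > 0` — is not ω-regular. -/
theorem suffix_property_not_omega_regular :
    ¬ OmegaRegular {σ : ℕ → Set (Fin 1) | ∃ k > 0, ∀ i, σ (i + k) = σ i} := by
  rintro ⟨Q, hQ, M, hM⟩
  classical
  -- Step 1: per-k data from acceptance of `(0^k 1)^ω`
  have H : ∀ k : ℕ, ∃ (q : Q) (ρ : ℕ → Q) (i j m : ℕ),
      q ∈ M.acc ∧ ρ 0 ∈ M.init ∧ (∀ n, ρ (n + 1) ∈ M.trans (ρ n) (wd k n)) ∧
      ρ i = q ∧ ρ j = q ∧ i ≤ m ∧ m + k < j ∧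
      wd k m = oo ∧ (∀ d, 1 ≤ d → d ≤ k → wd k (m + d) = zz) := by
    intro k
    have hwL : wd k ∈ {σ : ℕ → Set (Fin 1) | ∃ k > 0, ∀ i, σ (i + k) = σ i} :=
      ⟨k + 1, Nat.succ_pos k, fun i => wd_period k i⟩
    obtain ⟨ρ, hinit, htrans, hinf⟩ := (hM _).2 hwL
    obtain ⟨q, hq⟩ := exists_infinite_fiber ρ _ hinf
    obtain ⟨i, hi⟩ := hq.nonempty
    obtain ⟨j, hj, hij⟩ := hq.exists_gt (i + 2 * k + 1)
    have hd := Nat.div_add_mod i (k + 1)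
    have hr : i % (k + 1) < k + 1 := Nat.mod_lt _ (Nat.succ_pos k)
    refine ⟨q, ρ, i, j, i + (k - i % (k + 1)), hi.2 ▸ hi.1, hinit, htrans, hi.2, hj.2,
      Nat.le_add_right _ _, by omega, ?_, ?_⟩
    · have hm1 : i + (k - i % (k + 1)) + 1 = (k + 1) * (i / (k + 1)) + (k + 1) := by omega
      unfold wd
      rw [if_pos]
      rw [hm1, Nat.mul_add_mod, Nat.mod_self]
    · intro d h1 h2
      have hm1 : i + (k - i % (k + 1)) + d + 1 = (k + 1) * (i / (k + 1)) + ((k + 1) + d) := by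
        omega
      unfold wd
      rw [if_neg]
      rw [hm1, Nat.mul_add_mod, Nat.add_mod_left, Nat.mod_eq_of_lt (by omega)]
      omega
  choose qf ρf iF jF mF hacc hinit htrans hρi hρj him hmj hwo hwz using H
  -- Step 2: pigeonhole a single accepting state over infinitely many k
  obtain ⟨q, hqinf⟩ := exists_infinite_fiber qf Set.univ Set.infinite_univ
  choose next hnext using fun x : ℕ => hqinf.exists_gt x
  -- Step 3: strictly increasing sequence ks into the fiber
  let ks : ℕ → ℕ := fun t => Nat.rec (next 0) (fun _ prev => next prev) t
  have hks_mem : ∀ t, qf (ks t) = q := by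
    intro t
    induction t with
    | zero => exact (hnext 0).1.2
    | succ t ih => exact (hnext (ks t)).1.2
  have hks_succ : ∀ t, ks t < ks (t + 1) := fun t => (hnext (ks t)).2
  have hks_mono : StrictMono ks := strictMono_nat_of_lt_succ hks_succ
  have hks_ge : ∀ t, t ≤ ks t := fun t => hks_mono.le_apply
  -- chunk data
  set I : ℕ → ℕ := fun t => iF (ks t) with hIdef
  set J : ℕ → ℕ := fun t => jF (ks t) with hJdef
  set R : ℕ → ℕ → Q := fun t => ρf (ks t) with hRdef
  have hIJ : ∀ t, I t < J t := by
    intro t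
    have h1 := him (ks t)
    have h2 := hmj (ks t)
    show iF (ks t) < jF (ks t)
    omega
  have hRI : ∀ t, R t (I t) = q := fun t => (hρi (ks t)).trans (hks_mem t)
  have hRJ : ∀ t, R t (J t) = q := fun t => (hρj (ks t)).trans (hks_mem t)
  have hRt : ∀ t n, R t (n + 1) ∈ M.trans (R t n) (wd (ks t) n) := fun t => htrans (ks t)
  have hq_acc : q ∈ M.acc := hks_mem 0 ▸ hacc (ks 0)
  -- Step 4: the stitched word is accepted
  have haccepts : M.Accepts (sWord I J (fun t => ks t)) := by
    refine ⟨sRun I J R, ?_, ?_, ?_⟩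
    · rw [sRun_zero hIJ]; exact hinit (ks 0)
    · exact sRun_trans (fun t => ks t) hIJ hRt hRI hRJ
    · apply Set.infinite_of_injective_forall_mem
        (f := fun t => Sf I J t) (Sf_mono hIJ).injective
      intro t
      have h0 : sRun I J R (Sf I J t + 0) = R t (I t + 0) :=
        sRun_eval hIJ t 0 (by have := hIJ t; omega)
      simp only [Nat.add_zero] at h0
      show sRun I J R (Sf I J t) ∈ M.acc
      rw [h0, hRI t]
      exact hq_acc
  -- Step 5: hence the stitched word is periodic — contradiction
  obtain ⟨p, hp, hper⟩ := (hM _).1 haccepts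
  set σ : ℕ → Al := sWord I J (fun t => ks t) with hσdef
  have hmod : ∀ n, σ n = σ (n % p) := eq_of_mod_eq hp hper
  -- a `one` in chunk 0
  set x : ℕ := Sf I J 0 + (mF (ks 0) - I 0) with hxdef
  have hxo : σ x = oo := by
    have h1 := him (ks 0)
    have h2 := hmj (ks 0)
    have heval := sWord_eval (ks := fun t => ks t) hIJ 0 (mF (ks 0) - I 0)
      (by show mF (ks 0) - iF (ks 0) < jF (ks 0) - iF (ks 0); omega)
    rw [← hσdef] at heval
    rw [hxdef, heval]
    have : I 0 + (mF (ks 0) - I 0) = mF (ks 0) := by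
      show iF (ks 0) + (mF (ks 0) - iF (ks 0)) = mF (ks 0); omega
    rw [this]
    exact hwo (ks 0)
  -- a window of `p` zeros in chunk p
  set b : ℕ := Sf I J p + ((mF (ks p) - I p) + 1) with hbdef
  have hbz : ∀ e, e < p → σ (b + e) = zz := by
    intro e he
    have h1 := him (ks p)
    have h2 := hmj (ks p)
    have h3 : p ≤ ks p := hks_ge p
    have heval := sWord_eval (ks := fun t => ks t) hIJ p ((mF (ks p) - I p) + 1 + e)
      (by show mF (ks p) - iF (ks p) + 1 + e < jF (ks p) - iF (ks p); omega)
    have harg : b + e = Sf I J p + ((mF (ks p) - I p) + 1 + e) := by rw [hbdef]; ring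
    rw [← hσdef] at heval
    rw [harg, heval]
    have : I p + (mF (ks p) - I p + 1 + e) = mF (ks p) + (1 + e) := by
      show iF (ks p) + (mF (ks p) - iF (ks p) + 1 + e) = mF (ks p) + (1 + e); omega
    rw [this]
    exact hwz (ks p) (1 + e) (by omega) (by omega)
  -- derive the contradiction
  have hbp : b % p < p := Nat.mod_lt _ hp
  have hxp : x % p < p := Nat.mod_lt _ hp
  set e : ℕ := (x % p + p - b % p) % p with hedef
  have hep : e < p := Nat.mod_lt _ hp
  have hmodeq : (b + e) % p = x % p := by
    rw [hedef, Nat.add_mod_mod, ← Nat.mod_add_mod]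
    have h2 : b % p + (x % p + p - b % p) = x % p + p := by omega
    rw [h2, Nat.add_mod_right, Nat.mod_mod_of_dvd _ dvd_rfl]
  have : zz = oo := by
    calc zz = σ (b + e) := (hbz e hep).symm
    _ = σ ((b + e) % p) := hmod _
    _ = σ (x % p) := by rw [hmodeq]
    _ = σ x := (hmod x).symm
    _ = oo := hxo
  exact zz_ne_oo this
end

section
/- If a nondeterministic Büchi automaton A_Γ has the property that every accepted trace σ_Γ over AP_Γ correctly annotates the satisfaction of all θ ∈ cl(Γ) (i.e., at(θ) ∈ σ_Γ(i) iff ((σ_Γ)_{AP}, i) ⊨ θ), and every trace over AP has an accepted annotation, then the product construction K_Γ of a fair Kripke structure (K,F) with A_Γ satisfies: Traces(K_Γ, F_Γ) = { σ_Γ ∈ L(A_Γ) : (σ_Γ)_{AP} ∈ Traces(K,F) }, and the AP-projection map from Traces(K_Γ,F_Γ) onto Traces(K,F) is surjective. -/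
inductive PLTL (AP : Type) : Type
  | top : PLTL AP
  | atom : AP → PLTL AP
  | neg : PLTL AP → PLTL AP
  | orf : PLTL AP → PLTL AP → PLTL AP
  | next : PLTL AP → PLTL AP
  | yest : PLTL AP → PLTL AP
  | untl : PLTL AP → PLTL AP → PLTL AP
  | since : PLTL AP → PLTL AP → PLTL AP

/-- Satisfaction of a PLTL formula at position `i` of the trace `σ`. -/
def PLTL.sat {AP : Type} (σ : ℕ → Set AP) : PLTL AP → ℕ → Prop
  | .top, _ => True
  | .atom p, i => p ∈ σ i
  | .neg φ, i => ¬ φ.sat σ i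
  | .orf φ ψ, i => φ.sat σ i ∨ ψ.sat σ i
  | .next φ, i => φ.sat σ (i + 1)
  | .yest φ, i => 0 < i ∧ φ.sat σ (i - 1)
  | .untl φ ψ, i => ∃ j, i ≤ j ∧ ψ.sat σ j ∧ ∀ k, i ≤ k → k < j → φ.sat σ k
  | .since φ ψ, i => ∃ j, j ≤ i ∧ ψ.sat σ j ∧ ∀ k, j < k → k ≤ i → φ.sat σ k

/-- The Γ-valuation of a trace at a position: the set of formulas of Γ holding there. -/
def stutterVal {AP : Type} (Γ : Set (PLTL AP)) (σ : ℕ → Set AP) (i : ℕ) : Set (PLTL AP) :=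
  {θ ∈ Γ | θ.sat σ i}

/-- The set of subformulas of a PLTL formula (including the formula itself). -/
def PLTL.subf {AP : Type} : PLTL AP → Set (PLTL AP)
  | .top => {.top}
  | .atom p => {.atom p}
  | .neg φ => insert (.neg φ) φ.subf
  | .orf φ ψ => insert (.orf φ ψ) (φ.subf ∪ ψ.subf)
  | .next φ => insert (.next φ) φ.subf
  | .yest φ => insert (.yest φ) φ.subf
  | .untl φ ψ => insert (.untl φ ψ) (φ.subf ∪ ψ.subf)
  | .since φ ψ => insert (.since φ ψ) (φ.subf ∪ ψ.subf)

/-- Negation with the identification `¬¬θ = θ`. -/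
def PLTL.negf {AP : Type} : PLTL AP → PLTL AP
  | .neg φ => φ
  | φ => .neg φ

/-- The closure `cl(Γ)`: it contains `⊤`, `Y⊤`, all subformulas of formulas of `Γ`, and
the (single) negations of these formulas. -/
def pltlClosure {AP : Type} (Γ : Set (PLTL AP)) : Set (PLTL AP) :=
  (insert PLTL.top (insert (PLTL.yest PLTL.top) (⋃ θ ∈ Γ, θ.subf))) ∪
    PLTL.negf '' (insert PLTL.top (insert (PLTL.yest PLTL.top) (⋃ θ ∈ Γ, θ.subf)))

/-- The satisfaction atom at position `i` of trace `σ`: the closure formulas true there. -/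
def atomAt {AP : Type} (Γ : Set (PLTL AP)) (σ : ℕ → Set AP) (i : ℕ) : Set (PLTL AP) :=
  {θ | θ ∈ pltlClosure Γ ∧ θ.sat σ i}

/-- A Kripke structure over atomic propositions `AP` with states `S`. -/
structure Kripke (AP S : Type) where
  init : Set S
  E : S → S → Prop
  lab : S → Set AP

/-- A path of a Kripke structure. -/
def Kripke.IsPath {AP S : Type} (K : Kripke AP S) (π : ℕ → S) : Prop :=
  π 0 ∈ K.init ∧ ∀ i, K.E (π i) (π (i + 1))

/-- The set of traces of a Kripke structure. -/
def Kripke.traces {AP S : Type} (K : Kripke AP S) : Set (ℕ → Set AP) :=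
  {σ | ∃ π : ℕ → S, K.IsPath π ∧ σ = fun i => K.lab (π i)}

/-- The set of traces of `F`-fair paths of a Kripke structure. -/
def Kripke.fairTraces {AP S : Type} (K : Kripke AP S) (F : Set S) : Set (ℕ → Set AP) :=
  {σ | ∃ π : ℕ → S, K.IsPath π ∧ {i | π i ∈ F}.Infinite ∧ σ = fun i => K.lab (π i)}

/-- The proposition `at(θ)` of `AP_Γ = AP ⊕ PLTL AP` associated with a closure formula
(`at(p) = p` for atomic propositions). -/
def atProp {AP : Type} : PLTL AP → AP ⊕ PLTL AP
  | .atom p => Sum.inl p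
  | θ => Sum.inr θ

/-- The projection of a letter over `AP_Γ` to `AP`. -/
def projAP {AP : Type} (B : Set (AP ⊕ PLTL AP)) : Set AP := {p | Sum.inl p ∈ B}

/-- The synchronous product `K_Γ` of a fair Kripke structure `(K,F)` with an NBA `M` over
`2^{AP_Γ}`: states are tuples `(s, B, q, ℓ)` with `Lab(s) = B ∩ AP` (enforced on the
endpoints of initial states and transitions), transitions synchronize `K`-edges with
`M`-transitions on the letter `B`, and the boolean flag implements the standard
intersection of the fairness set `F` with the Büchi acceptance set. -/
def prodKripke {AP S Q : Type} (K : Kripke AP S) (F : Set S)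
    (M : NBA (Set (AP ⊕ PLTL AP)) Q) :
    Kripke (AP ⊕ PLTL AP) (S × Set (AP ⊕ PLTL AP) × Q × Bool) where
  init := {x | x.1 ∈ K.init ∧ x.2.2.1 ∈ M.init ∧ x.2.2.2 = false ∧
    K.lab x.1 = projAP x.2.1}
  E := fun x y =>
    K.lab x.1 = projAP x.2.1 ∧ K.lab y.1 = projAP y.2.1 ∧
    K.E x.1 y.1 ∧ y.2.2.1 ∈ M.trans x.2.2.1 x.2.1 ∧
    (x.2.2.2 = false → (y.2.2.2 = true ↔ x.1 ∈ F)) ∧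
    (x.2.2.2 = true → (y.2.2.2 = false ↔ x.2.2.1 ∈ M.acc))
  lab := fun x => x.2.1

/-- The fairness set `F_Γ` of the product: states with flag `2` whose automaton component
is an accepting state. -/
def prodFair {AP S Q : Type} (M : NBA (Set (AP ⊕ PLTL AP)) Q) :
    Set (S × Set (AP ⊕ PLTL AP) × Q × Bool) :=
  {x | x.2.2.2 = true ∧ x.2.2.1 ∈ M.acc}


section FlagLemmas

variable {flag : ℕ → Bool} {inF inAcc : ℕ → Prop}

/-- Between a `false` position and a later `true` position there is an `F`-position. -/
lemma flag_exists_F_between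
    (hFT : ∀ i, flag i = false → (flag (i+1) = true ↔ inF i)) :
    ∀ b a, a < b → flag a = false → flag b = true → ∃ k, a ≤ k ∧ k < b ∧ inF k := by
  intro b
  induction b with
  | zero => intro a h; omega
  | succ c ih =>
    intro a hab ha hb
    by_cases hc : flag c = true
    · have hac : a < c := by
        rcases Nat.lt_succ_iff_lt_or_eq.mp hab with h | h
        · exact h
        · subst h; rw [ha] at hc; simp at hc
      obtain ⟨k, h1, h2, h3⟩ := ih a hac ha hc
      exact ⟨k, h1, by omega, h3⟩
    · have hc' : flag c = false := by simpa using hc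
      exact ⟨c, by omega, by omega, (hFT c hc').mp hb⟩

/-- If the flagged-accepting set is infinite then the `F`-set is infinite. -/
lemma flag_inF_infinite
    (hTF : ∀ i, flag i = true → (flag (i+1) = false ↔ inAcc i))
    (hFT : ∀ i, flag i = false → (flag (i+1) = true ↔ inF i))
    (hfair : {i | flag i = true ∧ inAcc i}.Infinite) :
    {i | inF i}.Infinite := by
  apply Set.infinite_of_forall_exists_gt
  intro a
  obtain ⟨i, hi, hai⟩ := hfair.exists_gt a
  have hfalse : flag (i + 1) = false := (hTF i hi.1).mpr hi.2
  obtain ⟨j, hj, hij⟩ := hfair.exists_gt (i + 1)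
  obtain ⟨k, h1, h2, h3⟩ := flag_exists_F_between hFT j (i + 1) hij hfalse hj.1
  exact ⟨k, h3, by omega⟩

lemma flag_reach_acc
    (hTF : ∀ i, flag i = true → (flag (i+1) = false ↔ inAcc i)) :
    ∀ d n, flag n = true → inAcc (n + d) → ∃ m, n ≤ m ∧ flag m = true ∧ inAcc m := by
  intro d
  induction d with
  | zero => intro n hn ha; exact ⟨n, le_refl n, hn, ha⟩
  | succ d ih =>
    intro n hn ha
    by_cases h : inAcc n
    · exact ⟨n, le_refl n, hn, h⟩
    · have hnext : flag (n + 1) = true := by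
        rcases Bool.eq_false_or_eq_true (flag (n+1)) with h' | h'
        · exact h'
        · exact absurd ((hTF n hn).mp h') h
      obtain ⟨m, h1, h2, h3⟩ :=
        ih (n + 1) hnext (by rw [show n + 1 + d = n + (d + 1) by omega]; exact ha)
      exact ⟨m, by omega, h2, h3⟩

lemma flag_reach_true
    (hFT : ∀ i, flag i = false → (flag (i+1) = true ↔ inF i)) :
    ∀ d n, flag n = false → inF (n + d) → ∃ m, n ≤ m ∧ flag m = true := by
  intro d
  induction d with
  | zero => intro n hn hf
            exact ⟨n + 1, by omega, (hFT n hn).mpr hf⟩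
  | succ d ih =>
    intro n hn hf
    rcases Bool.eq_false_or_eq_true (flag (n + 1)) with h' | h'
    · exact ⟨n + 1, by omega, h'⟩
    · obtain ⟨m, h1, h2⟩ :=
        ih (n + 1) h' (by rw [show n + 1 + d = n + (d + 1) by omega]; exact hf)
      exact ⟨m, by omega, h2⟩

/-- If both the `F`-set and the acceptance set are infinite, the flagged-accepting set
is infinite. -/
lemma flag_fair_infinite
    (hTF : ∀ i, flag i = true → (flag (i+1) = false ↔ inAcc i))
    (hFT : ∀ i, flag i = false → (flag (i+1) = true ↔ inF i))
    (hF : {i | inF i}.Infinite) (hA : {i | inAcc i}.Infinite) :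
    {i | flag i = true ∧ inAcc i}.Infinite := by
  apply Set.infinite_of_forall_exists_gt
  intro a
  have step : ∀ n, flag n = true → ∃ m, n ≤ m ∧ flag m = true ∧ inAcc m := by
    intro n hn
    obtain ⟨j, hj, hnj⟩ := hA.exists_gt n
    obtain ⟨m, h1, h2, h3⟩ :=
      flag_reach_acc hTF (j - n) n hn (by rw [show n + (j - n) = j by omega]; exact hj)
    exact ⟨m, h1, h2, h3⟩
  rcases Bool.eq_false_or_eq_true (flag (a + 1)) with h' | h'
  · obtain ⟨b, hb1, hb2, hb3⟩ := step (a + 1) h'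
    exact ⟨b, ⟨hb2, hb3⟩, by omega⟩
  · obtain ⟨j, hj, hij⟩ := hF.exists_gt (a + 1)
    obtain ⟨m, h1, h2⟩ := flag_reach_true hFT (j - (a+1)) (a + 1) h'
      (by rw [show a + 1 + (j - (a + 1)) = j by omega]; exact hj)
    obtain ⟨b, hb1, hb2, hb3⟩ := step m h2
    exact ⟨b, ⟨hb2, hb3⟩, by omega⟩

end FlagLemmas

open Classical in
noncomputable def mkFlag (p q : ℕ → Prop) : ℕ → Bool
  | 0 => false
  | i+1 => if mkFlag p q i = true then (if q i then false else true)
           else (if p i then true else false)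

lemma mkFlag_zero (p q : ℕ → Prop) : mkFlag p q 0 = false := rfl

open Classical in
lemma mkFlag_TF (p q : ℕ → Prop) (i : ℕ) (h : mkFlag p q i = true) :
    mkFlag p q (i+1) = false ↔ q i := by
  rw [mkFlag, if_pos h]
  by_cases hq : q i <;> simp [hq]

open Classical in
lemma mkFlag_FT (p q : ℕ → Prop) (i : ℕ) (h : mkFlag p q i = false) :
    mkFlag p q (i+1) = true ↔ p i := by
  rw [mkFlag, if_neg (by simp [h])]
  by_cases hp : p i <;> simp [hp]

/-- if the NBA `M` correctly annotates the satisfaction of all closure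
formulas on every accepted trace, and every trace over `AP` admits an accepted annotation,
then the fair traces of the product `K_Γ` are exactly the accepted annotated traces whose
`AP`-projection is a fair trace of `(K,F)`, and the `AP`-projection maps the fair traces of
the product onto the fair traces of `(K,F)`. -/
theorem prodKripke_correct {AP S Q : Type} [Finite S] [Finite Q]
    (Γ : Set (PLTL AP)) (hΓ : Γ.Finite) (K : Kripke AP S) (F : Set S)
    (M : NBA (Set (AP ⊕ PLTL AP)) Q)
    (h1 : ∀ σΓ : ℕ → Set (AP ⊕ PLTL AP), M.Accepts σΓ →
      ∀ (i : ℕ) (θ : PLTL AP), θ ∈ pltlClosure Γ →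
        (atProp θ ∈ σΓ i ↔ θ.sat (fun j => projAP (σΓ j)) i))
    (h2 : ∀ σ : ℕ → Set AP, ∃ σΓ : ℕ → Set (AP ⊕ PLTL AP),
      M.Accepts σΓ ∧ (fun i => projAP (σΓ i)) = σ) :
    (prodKripke K F M).fairTraces (prodFair M) =
      {σΓ | M.Accepts σΓ ∧ (fun i => projAP (σΓ i)) ∈ K.fairTraces F} ∧
    ∀ σ ∈ K.fairTraces F, ∃ σΓ ∈ (prodKripke K F M).fairTraces (prodFair M),
      (fun i => projAP (σΓ i)) = σ := by
  have main : (prodKripke K F M).fairTraces (prodFair M) =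
      {σΓ | M.Accepts σΓ ∧ (fun i => projAP (σΓ i)) ∈ K.fairTraces F} := by
    ext σΓ
    constructor
    · rintro ⟨π, ⟨hinit, hE⟩, hfair, rfl⟩
      have hlab : ∀ i, K.lab (π i).1 = projAP (π i).2.1 := by
        intro i
        cases i with
        | zero => exact hinit.2.2.2
        | succ n => exact (hE n).2.1
      have hfair' : {i | (π i).2.2.2 = true ∧ (π i).2.2.1 ∈ M.acc}.Infinite := hfair
      constructor
      · refine ⟨fun i => (π i).2.2.1, hinit.2.1, fun i => (hE i).2.2.2.1, ?_⟩
        exact hfair'.mono (fun i hi => hi.2)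
      · refine ⟨fun i => (π i).1, ⟨hinit.1, fun i => (hE i).2.2.1⟩, ?_, ?_⟩
        · exact flag_inF_infinite (fun i => (hE i).2.2.2.2.2) (fun i => (hE i).2.2.2.2.1) hfair'
        · funext i
          exact ((hlab i).symm : projAP ((prodKripke K F M).lab (π i)) = K.lab (π i).1)
    · rintro ⟨⟨ρ, hρ0, hρE, hρacc⟩, π, ⟨hπ0, hπE⟩, hπF, heq⟩
      have hlab : ∀ i, K.lab (π i) = projAP (σΓ i) := fun i => (congrFun heq i).symm
      set flag := mkFlag (fun i => π i ∈ F) (fun i => ρ i ∈ M.acc) with hflag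
      refine ⟨fun i => (π i, σΓ i, ρ i, flag i), ⟨⟨hπ0, hρ0, rfl, hlab 0⟩, ?_⟩, ?_, rfl⟩
      · intro i
        exact ⟨hlab i, hlab (i+1), hπE i, hρE i,
          fun h => by simpa using mkFlag_FT (fun i => π i ∈ F) (fun i => ρ i ∈ M.acc) i (by simpa using h),
          fun h => by simpa using mkFlag_TF (fun i => π i ∈ F) (fun i => ρ i ∈ M.acc) i h⟩
      · exact flag_fair_infinite
          (mkFlag_TF (fun i => π i ∈ F) (fun i => ρ i ∈ M.acc))
          (mkFlag_FT (fun i => π i ∈ F) (fun i => ρ i ∈ M.acc)) hπF hρacc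
  refine ⟨main, ?_⟩
  intro σ hσ
  obtain ⟨σΓ, hacc, hproj⟩ := h2 σ
  refine ⟨σΓ, ?_, hproj⟩
  rw [main]
  exact ⟨hacc, by rw [hproj]; exact hσ⟩
end

section
/- For the transformed Kripke structure (K_Γ, F_Γ) built from a fair Kripke structure (K,F) by adding summary edges, the set Traces(K_Γ,F_Γ) restricted to well-formed traces equals stfr^#_Γ(Traces(K,F)); in particular every trace in stfr^#_Γ(Traces(K,F)) is well-formed, meaning either it is a Γ-stutter-free trace over AP, or there is exactly one position i+1 where # holds and removing that position yields the Γ-stutter trace of the result. -/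
/-- Block starts of the stutter factorization w.r.t. a valuation `v`: position `0`,
together with every position where the valuation differs from the previous one. -/
def startSet {α : Type} (v : ℕ → α) : Set ℕ :=
  {i | i = 0 ∨ v (i - 1) ≠ v i}

/-- The `(Γ,ω)`-stutter factorization (as a set of positions): the block starts, together
with all positions of the final infinite block (in case only finitely many blocks exist). -/
def omegaFact {α : Type} (v : ℕ → α) : Set ℕ :=
  startSet v ∪ {i | ∀ j, i < j → j ∉ startSet v}

/-- The increasing enumeration `ℓ_k` of the `(Γ,ω)`-stutter factorization. -/
noncomputable def factPos {α : Type} (v : ℕ → α) (k : ℕ) : ℕ :=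
  Nat.nth (· ∈ omegaFact v) k

/-- The least element of the `(Γ,ω)`-stutter factorization strictly greater than `i`. -/
noncomputable def succPos {α : Type} (v : ℕ → α) (i : ℕ) : ℕ :=
  sInf {ℓ ∈ omegaFact v | i < ℓ}

/-- The greatest element of the `(Γ,ω)`-stutter factorization strictly smaller than `i`. -/
noncomputable def predPos {α : Type} (v : ℕ → α) (i : ℕ) : ℕ :=
  sSup {ℓ ∈ omegaFact v | ℓ < i}

/-- The propositional Γ-valuation of a trace at a position. -/
def pval {β : Type} (Γ : Set β) (σ : ℕ → Set β) (i : ℕ) : Set β := σ i ∩ Γ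

/-- The Γ-stutter trace of a trace, for a propositional set Γ. -/
noncomputable def pstfr {β : Type} (Γ : Set β) (σ : ℕ → Set β) : ℕ → Set β :=
  fun k => σ (factPos (pval Γ σ) k)

/-- The fresh proposition `#`. -/
def hashP {AP : Type} : AP ⊕ Unit := Sum.inr ()

/-- The extension `stfr^#_Γ(L)` of `stfr_Γ(L)`: it contains the Γ-stutter traces of the
traces of `L` (lifted to `AP ∪ {#}`), and additionally, for each `σ ∈ L` and each position
`i` strictly between two consecutive elements `ℓ_k < i < ℓ_{k+1}` of the `(Γ,ω)`-stutter
factorization of `σ`, the trace `σ(ℓ_0)…σ(ℓ_k)·(σ(i) ∪ {#})·σ(ℓ_{k+1})σ(ℓ_{k+2})⋯`. -/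
noncomputable def stfrHash {AP : Type} (Γ : Set AP) (L : Set (ℕ → Set AP)) :
    Set (ℕ → Set (AP ⊕ Unit)) :=
  {τ | ∃ σ ∈ L, τ = fun m => Sum.inl '' pstfr Γ σ m} ∪
  {τ | ∃ σ ∈ L, ∃ k i : ℕ,
    factPos (pval Γ σ) k < i ∧ i < factPos (pval Γ σ) (k + 1) ∧
    τ = fun m =>
      if m ≤ k then Sum.inl '' σ (factPos (pval Γ σ) m)
      else if m = k + 1 then insert hashP (Sum.inl '' σ i)
      else Sum.inl '' σ (factPos (pval Γ σ) (m - 1))}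

/-- A trace over `AP ∪ {#}` is well-formed if either it is a Γ-stutter-free trace over
`AP`, or there is exactly one position `i+1` where `#` holds and removing that position
yields its Γ-stutter trace. -/
noncomputable def WellFormed {AP : Type} (Γ : Set AP) (τ : ℕ → Set (AP ⊕ Unit)) : Prop :=
  ((∀ m, hashP ∉ τ m) ∧ pstfr (Sum.inl '' Γ) τ = τ) ∨
  (∃ i : ℕ, (∀ m, hashP ∈ τ m ↔ m = i + 1) ∧
    pstfr (Sum.inl '' Γ) τ = fun m => if m ≤ i then τ m else τ (m + 1))

/-- `R_Γ(K)`: pairs `(s,s')` such that the Γ-valuation of `s` and `s'` differ and there is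
a finite path `s·ρ·s'` of `K` along which the Γ-valuation changes only at the final state. -/
def RGamma {AP S : Type} (K : Kripke AP S) (Γ : Set AP) (s s' : S) : Prop :=
  K.lab s ∩ Γ ≠ K.lab s' ∩ Γ ∧
  ∃ (m : ℕ) (π : ℕ → S), 1 ≤ m ∧ π 0 = s ∧ π m = s' ∧
    (∀ i < m, K.E (π i) (π (i + 1))) ∧ (∀ i < m, K.lab (π i) ∩ Γ = K.lab s ∩ Γ)

/-- `R_Γ(K,F)`: as `R_Γ(K)`, additionally requiring that the finite path visits `F`. -/
def RGammaF {AP S : Type} (K : Kripke AP S) (Γ : Set AP) (F : Set S) (s s' : S) : Prop :=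
  K.lab s ∩ Γ ≠ K.lab s' ∩ Γ ∧
  ∃ (m : ℕ) (π : ℕ → S), 1 ≤ m ∧ π 0 = s ∧ π m = s' ∧
    (∀ i < m, K.E (π i) (π (i + 1))) ∧ (∀ i < m, K.lab (π i) ∩ Γ = K.lab s ∩ Γ) ∧
    (∃ i ≤ m, π i ∈ F)

/-- `R^#_Γ(K)`: pairs `(s,s')` with the same Γ-valuation joined by a finite path of length
at least 2 along which the Γ-valuation never changes. -/
def RHash {AP S : Type} (K : Kripke AP S) (Γ : Set AP) (s s' : S) : Prop :=
  K.lab s ∩ Γ = K.lab s' ∩ Γ ∧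
  ∃ (m : ℕ) (π : ℕ → S), 1 ≤ m ∧ π 0 = s ∧ π m = s' ∧
    (∀ i < m, K.E (π i) (π (i + 1))) ∧ (∀ i < m, K.lab (π i) ∩ Γ = K.lab s ∩ Γ)

/-- `R^#_Γ(K,F)`: as `R^#_Γ(K)`, additionally requiring that the finite path visits `F`. -/
def RHashF {AP S : Type} (K : Kripke AP S) (Γ : Set AP) (F : Set S) (s s' : S) : Prop :=
  K.lab s ∩ Γ = K.lab s' ∩ Γ ∧
  ∃ (m : ℕ) (π : ℕ → S), 1 ≤ m ∧ π 0 = s ∧ π m = s' ∧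
    (∀ i < m, K.E (π i) (π (i + 1))) ∧ (∀ i < m, K.lab (π i) ∩ Γ = K.lab s ∩ Γ) ∧
    (∃ i ≤ m, π i ∈ F)

/-- The transformed Kripke structure `K_Γ` over `AP ∪ {#}` with states
`S × 2^{{acc,#}}` (encoded as `S × Bool × Bool`, where the first Boolean is `acc ∈ T` and
the second is `# ∈ T`), obtained by adding summary edges for the relations `R_Γ` and
`R^#_Γ`, with `#` marking the targets of `R^#`-summary edges and `acc` tracking visits
to `F`. -/
def stutterKripke {AP S : Type} (K : Kripke AP S) (F : Set S) (Γ : Set AP) :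
    Kripke (AP ⊕ Unit) (S × Bool × Bool) where
  init := {x | x.1 ∈ K.init ∧ x.2.1 = false ∧ x.2.2 = false}
  E := fun x y =>
    ((K.E x.1 y.1 ∨ RGamma K Γ x.1 y.1) ∧ y.2.2 = false ∧ (y.2.1 = true ↔ y.1 ∈ F)) ∨
    (RGammaF K Γ F x.1 y.1 ∧ y.2.2 = false ∧ y.2.1 = true) ∨
    (RHash K Γ x.1 y.1 ∧ x.2.2 = false ∧ y.2.2 = true ∧ (y.2.1 = true ↔ y.1 ∈ F)) ∨
    (RHashF K Γ F x.1 y.1 ∧ x.2.2 = false ∧ y.2.2 = true ∧ y.2.1 = true)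
  lab := fun x => Sum.inl '' K.lab x.1 ∪ (if x.2.2 = true then {hashP} else ∅)

/-- The fairness set `F_Γ` of `K_Γ`: the states marked with `acc`. -/
def stutterFair {S : Type} : Set (S × Bool × Bool) := {x | x.2.1 = true}

/-!
The `(Γ,ω)`-stutter factorization is determined by the local conditions of `IsStutterFact`,
so factorizations can be recognized rather than computed.

Forward: a fair path of `K` observed at its factorization positions (for a `#`-trace, also at
one position inside a non-final block) is the projection of a fair path of `K_Γ`, because each
step between consecutive observed positions is summarized by an edge of `K_Γ`, with `acc`
recording the visits to `F` in between.

Backward: expanding each edge of a fair path of `K_Γ` into the segment of `K` it summarizes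
gives a fair path of `K`. Well-formedness says that the valuation along the `K_Γ`-path is
factorized by the identity or by the enumeration skipping the `#`-position; stretching that
factorization along the expansion factorizes the expanded path, so the trace lies in
`stfr^#_Γ`.
-/

/-- The `ℕ`-analogue of `Fin.succAbove`: the increasing enumeration of `ℕ \ {p}`. -/
def natSuccAbove (p m : ℕ) : ℕ := if m < p then m else m + 1

lemma strictMono_natSuccAbove (p : ℕ) : StrictMono (natSuccAbove p) := by
  intro a b hab
  unfold natSuccAbove
  split_ifs <;> omega

lemma mem_range_natSuccAbove {p n : ℕ} : n ∈ Set.range (natSuccAbove p) ↔ n ≠ p := by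
  refine ⟨?_, fun hn => ?_⟩
  · rintro ⟨m, rfl⟩
    unfold natSuccAbove
    split_ifs <;> omega
  · by_cases h : n < p
    · exact ⟨n, if_pos h⟩
    · exact ⟨n - 1, by unfold natSuccAbove; split_ifs <;> omega⟩

/-- The `ℕ`-analogue of `Fin.insertNth`. -/
def insertNth {α : Type} (p : ℕ) (x : α) (f : ℕ → α) (m : ℕ) : α :=
  if m < p then f m else if m = p then x else f (m - 1)

section InsertNth

variable {α : Type} {p m : ℕ} {x : α} {f : ℕ → α}

lemma insertNth_of_lt (h : m < p) : insertNth p x f m = f m := if_pos h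

lemma insertNth_self : insertNth p x f p = x := by simp [insertNth]

lemma insertNth_succ_of_le (h : p ≤ m) : insertNth p x f (m + 1) = f m := by
  simp [insertNth, show ¬m + 1 < p by omega, show m + 1 ≠ p by omega]

lemma insertNth_comp_natSuccAbove : insertNth p (f p) (f ∘ natSuccAbove p) = f := by
  funext m
  rcases lt_trichotomy m p with h | rfl | h
  · rw [insertNth_of_lt h, Function.comp_apply, natSuccAbove, if_pos h]
  · exact insertNth_self
  · obtain ⟨n, rfl⟩ := Nat.exists_eq_add_one_of_ne_zero (show m ≠ 0 by omega)
    rw [insertNth_succ_of_le (by omega), Function.comp_apply, natSuccAbove, if_neg (by omega)]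

lemma insertNth_cases (ℓ : ℕ → ℕ) (k i m : ℕ) :
    (m ≠ k ∧ ∃ n, n ≠ k ∧
      insertNth (k + 1) i ℓ m = ℓ n ∧ insertNth (k + 1) i ℓ (m + 1) = ℓ (n + 1)) ∨
    (m = k ∧ insertNth (k + 1) i ℓ m = ℓ k ∧ insertNth (k + 1) i ℓ (m + 1) = i) ∨
    (m = k + 1 ∧ insertNth (k + 1) i ℓ m = i ∧ insertNth (k + 1) i ℓ (m + 1) = ℓ (k + 1)) := by
  rcases lt_trichotomy m k with h | rfl | h
  · exact Or.inl ⟨h.ne, m, h.ne, insertNth_of_lt (by omega), insertNth_of_lt (by omega)⟩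
  · exact Or.inr (Or.inl ⟨rfl, insertNth_of_lt (Nat.lt_add_one m), insertNth_self⟩)
  obtain ⟨n, rfl⟩ := Nat.exists_eq_add_one_of_ne_zero (show m ≠ 0 by omega)
  rcases (Nat.succ_le_of_lt h).eq_or_lt with h' | h'
  · obtain rfl : n = k := by omega
    exact Or.inr (Or.inr ⟨rfl, insertNth_self, insertNth_succ_of_le le_rfl⟩)
  · exact Or.inl ⟨by omega, n, by omega, insertNth_succ_of_le (by omega),
      insertNth_succ_of_le (by omega)⟩

lemma StrictMono.insertNth {ℓ : ℕ → ℕ} (hℓ : StrictMono ℓ) {k i : ℕ} (h1 : ℓ k < i)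
    (h2 : i < ℓ (k + 1)) : StrictMono (insertNth (k + 1) i ℓ) := by
  refine strictMono_nat_of_lt_succ fun m => ?_
  rcases insertNth_cases ℓ k i m with ⟨-, n, -, hm, hm'⟩ | ⟨-, hm, hm'⟩ | ⟨-, hm, hm'⟩ <;>
    rw [hm, hm']
  exacts [hℓ (Nat.lt_add_one n), h1, h2]

end InsertNth

section StutterFactorization

variable {α β : Type}

lemma omegaFact_infinite (v : ℕ → α) : (omegaFact v).Infinite := by
  refine Set.infinite_of_forall_exists_gt fun a => ?_
  by_cases h : ∃ j, a < j ∧ j ∈ startSet v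
  · obtain ⟨j, hj, hjs⟩ := h
    exact ⟨j, Or.inl hjs, hj⟩
  · push Not at h
    exact ⟨a + 1, Or.inr fun j hj => h j (by omega), by omega⟩

lemma eq_of_forall_notMem_startSet {v : ℕ → α} {a j : ℕ} (h : a ≤ j)
    (hn : ∀ t, a < t → t ≤ j → t ∉ startSet v) : v j = v a := by
  induction j, h using Nat.le_induction with
  | base => rfl
  | succ j hj ih =>
    have hs : v j = v (j + 1) := by
      by_contra hne
      exact hn (j + 1) (by omega) le_rfl (Or.inr hne)
    rw [← hs, ih fun t ht ht' => hn t ht (by omega)]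

/-- `e` enumerates the `(Γ,ω)`-stutter factorization of `v` (`IsStutterFact.factPos_eq`):
consecutive blocks carry the same value only inside the final infinite block, which is cut
into singletons. -/
structure IsStutterFact (v : ℕ → α) (e : ℕ → ℕ) : Prop where
  strictMono : StrictMono e
  zero : e 0 = 0
  const : ∀ k j, e k ≤ j → j < e (k + 1) → v j = v (e k)
  stutter : ∀ k, v (e (k + 1)) = v (e k) → e (k + 1) = e k + 1 ∧ ∀ j, e k ≤ j → v j = v (e k)

lemma isStutterFact_factPos (v : ℕ → α) : IsStutterFact v (factPos v) := by
  have hinf := omegaFact_infinite v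
  have hmono : StrictMono (factPos v) := Nat.nth_strictMono hinf
  have hgap : ∀ k t, factPos v k < t → t < factPos v (k + 1) → t ∉ omegaFact v :=
    fun k t h1 h2 ht => by have := Nat.le_nth_of_lt_nth_succ h2 ht; unfold factPos at h1; omega
  have hconst : ∀ k j, factPos v k ≤ j → j < factPos v (k + 1) → v j = v (factPos v k) :=
    fun k j h1 h2 => eq_of_forall_notMem_startSet h1
      fun t ht ht' hs => hgap k t ht (by omega) (Or.inl hs)
  refine ⟨hmono, Nat.nth_zero_of_zero (Or.inl (Or.inl rfl)), hconst, fun k heq => ?_⟩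
  set a := factPos v k
  set b := factPos v (k + 1)
  have hab : a < b := hmono (Nat.lt_add_one k)
  have hb : b ∉ startSet v := by
    rintro (hb | hb)
    · omega
    · exact hb (by rw [hconst k (b - 1) (by omega) (by omega), heq])
  have htail : ∀ t, b < t → t ∉ startSet v := by
    rcases Nat.nth_mem_of_infinite hinf (k + 1) with h | h
    · exact absurd h hb
    · exact h
  have hnot : ∀ t, a < t → t ∉ startSet v := fun t ht hs => by
    rcases lt_trichotomy t b with h | rfl | h
    exacts [hgap k t ht h (Or.inl hs), hb hs, htail t h hs]
  refine ⟨?_, fun j hj => eq_of_forall_notMem_startSet hj fun t ht _ => hnot t ht⟩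
  by_contra hne
  exact hgap k (a + 1) (by omega) (by omega) (Or.inr fun t ht => hnot t (by omega))

lemma IsStutterFact.le_succ_of_eq {v : ℕ → α} {e₁ e₂ : ℕ → ℕ} (h₁ : IsStutterFact v e₁)
    (h₂ : IsStutterFact v e₂) {n : ℕ} (hn : e₁ n = e₂ n) : e₁ (n + 1) ≤ e₂ (n + 1) := by
  by_contra! hlt
  have h₂n := h₂.strictMono (Nat.lt_add_one n)
  have heq : v (e₂ (n + 1)) = v (e₂ n) := by
    rw [h₁.const n _ (by omega) hlt, hn]
  obtain ⟨hsucc, hconst⟩ := h₂.stutter n heq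
  have := (h₁.stutter n (by rw [hn, hconst _ (by omega)])).1
  omega

lemma IsStutterFact.eq {v : ℕ → α} {e₁ e₂ : ℕ → ℕ} (h₁ : IsStutterFact v e₁)
    (h₂ : IsStutterFact v e₂) : e₁ = e₂ := by
  funext n
  induction n with
  | zero => rw [h₁.zero, h₂.zero]
  | succ n ih => exact le_antisymm (h₁.le_succ_of_eq h₂ ih) (h₂.le_succ_of_eq h₁ ih.symm)

lemma IsStutterFact.factPos_eq {v : ℕ → α} {e : ℕ → ℕ} (h : IsStutterFact v e) :
    factPos v = e :=
  (isStutterFact_factPos v).eq h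

lemma factPos_eq_of_apply_eq {v : ℕ → α} {e : ℕ → ℕ} (he : StrictMono e)
    (hrange : ∀ m, factPos v m ∈ Set.range e) (hv : ∀ m, v (factPos v m) = v (e m)) :
    factPos v = e := by
  have hℓ := isStutterFact_factPos v
  funext n
  induction n with
  | zero =>
    obtain ⟨j, hj⟩ := hrange 0
    have := he.monotone (Nat.zero_le j)
    have := hℓ.zero
    omega
  | succ n ih =>
    obtain ⟨j, hj⟩ := hrange (n + 1)
    have hnj : n < j := he.lt_iff_lt.mp (by rw [hj, ← ih]; exact hℓ.strictMono (Nat.lt_add_one n))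
    have hle : e (n + 1) ≤ factPos v (n + 1) := hj ▸ he.monotone hnj
    refine le_antisymm ?_ hle
    by_contra! hlt
    have hen := he (Nat.lt_add_one n)
    have heq : v (factPos v (n + 1)) = v (factPos v n) := by
      rw [hv, hℓ.const n _ (by omega) hlt]
    have := (hℓ.stutter n heq).1
    omega

lemma factPos_comp_injective {f : α → β} (hf : Function.Injective f) (v : ℕ → α) :
    factPos (f ∘ v) = factPos v := by
  have : startSet (f ∘ v) = startSet v := by
    ext i
    simp only [startSet, Function.comp_apply, hf.ne_iff]
  unfold factPos omegaFact
  rw [this]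

lemma IsStutterFact.comp_self {v : ℕ → α} {e : ℕ → ℕ} (h : IsStutterFact v e) :
    IsStutterFact (v ∘ e) id where
  strictMono := strictMono_id
  zero := rfl
  const k j h1 h2 := by
    obtain rfl : j = k := by dsimp only [id] at h1 h2; omega
    rfl
  stutter k heq := ⟨rfl, fun j hj => (h.stutter k heq).2 _ (h.strictMono.monotone hj)⟩

lemma IsStutterFact.apply_succ_ne {v : ℕ → α} {e : ℕ → ℕ} (h : IsStutterFact v e) {k i : ℕ}
    (h1 : e k < i) (h2 : i < e (k + 1)) : v (e (k + 1)) ≠ v (e k) := fun heq => by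
  have := (h.stutter k heq).1
  omega

lemma exists_block {g : ℕ → ℕ} (hg : StrictMono g) (hg0 : g 0 = 0) (j : ℕ) :
    ∃ m, g m ≤ j ∧ j < g (m + 1) := by
  induction j with
  | zero => exact ⟨0, hg0.le, by have := hg (Nat.lt_add_one 0); omega⟩
  | succ j ih =>
    obtain ⟨m, h1, h2⟩ := ih
    have := hg (Nat.lt_add_one (m + 1))
    rcases (Nat.succ_le_of_lt h2).lt_or_eq with h | h
    · exact ⟨m, by omega, h⟩
    · exact ⟨m + 1, h.ge, by omega⟩

/-- `u` is `V` with each position `m` stretched to the block `[g m, g (m + 1))`; `hstep` says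
that this creates no new stutter step. -/
lemma IsStutterFact.expand {V u : ℕ → α} {f g : ℕ → ℕ} (hV : IsStutterFact V f)
    (hg : StrictMono g) (hg0 : g 0 = 0) (hu : ∀ m j, g m ≤ j → j < g (m + 1) → u j = V m)
    (hstep : ∀ k, V (f (k + 1)) = V (f k) → g (f k + 1) = g (f k) + 1) :
    IsStutterFact u (g ∘ f) := by
  have hug : ∀ m, u (g m) = V m := fun m => hu m (g m) le_rfl (hg (Nat.lt_add_one m))
  have hblock : ∀ j, ∃ m, g m ≤ j ∧ j < g (m + 1) ∧ u j = V m := fun j => by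
    obtain ⟨m, h1, h2⟩ := exists_block hg hg0 j
    exact ⟨m, h1, h2, hu m j h1 h2⟩
  refine ⟨hg.comp hV.strictMono, by simp [hV.zero, hg0], fun k j h1 h2 => ?_, fun k heq => ?_⟩
  · obtain ⟨m, hm1, hm2, hj⟩ := hblock j
    have hkm : f k ≤ m := Nat.lt_succ_iff.mp (hg.lt_iff_lt.mp (h1.trans_lt hm2))
    have hmk : m < f (k + 1) := hg.lt_iff_lt.mp (hm1.trans_lt h2)
    simp only [Function.comp, hug, hj, hV.const k m hkm hmk]
  · simp only [Function.comp, hug] at heq ⊢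
    obtain ⟨hsucc, hconst⟩ := hV.stutter k heq
    refine ⟨by rw [hsucc, hstep k heq], fun j hj => ?_⟩
    obtain ⟨m, -, hm2, hj'⟩ := hblock j
    rw [hj', hconst m (Nat.lt_succ_iff.mp (hg.lt_iff_lt.mp (hj.trans_lt hm2)))]

/-- The inserted position repeats the value of block `k`, which is not the final block, so
it is exactly the position that the factorization of the result skips. -/
lemma IsStutterFact.comp_insertNth {v : ℕ → α} {ℓ : ℕ → ℕ} (hℓ : IsStutterFact v ℓ) {k i : ℕ}
    (h1 : ℓ k < i) (h2 : i < ℓ (k + 1)) :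
    IsStutterFact (v ∘ insertNth (k + 1) i ℓ) (natSuccAbove (k + 1)) := by
  have hsa : ∀ m, natSuccAbove (k + 1) m = if m < k + 1 then m else m + 1 := fun _ => rfl
  refine hℓ.comp_self.expand (strictMono_natSuccAbove _) rfl (fun m j hj1 hj2 => ?_)
    fun n heq => ?_
  · rw [hsa] at hj1 hj2
    rcases lt_trichotomy j (k + 1) with hj | rfl | hj
    · obtain rfl : m = j := by split_ifs at hj1 hj2 <;> omega
      simp only [Function.comp_apply, insertNth_of_lt hj]
    · obtain rfl : m = k := by split_ifs at hj1 hj2 <;> omega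
      simp only [Function.comp_apply, insertNth_self]
      exact hℓ.const m i h1.le h2
    · obtain rfl : m = j - 1 := by split_ifs at hj1 hj2 <;> omega
      obtain ⟨n, rfl⟩ := Nat.exists_eq_add_one_of_ne_zero (show j ≠ 0 by omega)
      simp only [Function.comp_apply, insertNth_succ_of_le (show k + 1 ≤ n by omega)]
      rfl
  · have hnk : n ≠ k := by rintro rfl; exact hℓ.apply_succ_ne h1 h2 heq
    simp only [id, hsa]
    split_ifs <;> omega

end StutterFactorization

section LiftTrace

variable {AP : Type}

def liftTrace (σ : ℕ → Set AP) (h : ℕ → Bool) (m : ℕ) : Set (AP ⊕ Unit) :=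
  Sum.inl '' σ m ∪ (if h m = true then {hashP} else ∅)

lemma hashP_mem_liftTrace {σ : ℕ → Set AP} {h : ℕ → Bool} {m : ℕ} :
    hashP ∈ liftTrace σ h m ↔ h m = true := by
  unfold liftTrace
  split_ifs with hm <;> simp [hm, hashP]

lemma pval_liftTrace (Γ : Set AP) (σ : ℕ → Set AP) (h : ℕ → Bool) :
    pval (Sum.inl '' Γ) (liftTrace σ h) = Set.image Sum.inl ∘ pval Γ σ := by
  funext m
  simp only [pval, liftTrace, Function.comp_apply, Set.union_inter_distrib_right,
    Set.image_inter Sum.inl_injective]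
  split_ifs <;> simp [hashP]

lemma factPos_pval_liftTrace (Γ : Set AP) (σ : ℕ → Set AP) (h : ℕ → Bool) :
    factPos (pval (Sum.inl '' Γ) (liftTrace σ h)) = factPos (pval Γ σ) := by
  rw [pval_liftTrace, factPos_comp_injective (Set.image_injective.mpr Sum.inl_injective)]

lemma pval_eq_of_liftTrace_eq {Γ : Set AP} {σ : ℕ → Set AP} {h : ℕ → Bool} {a b : ℕ}
    (hab : liftTrace σ h a = liftTrace σ h b) : pval Γ σ a = pval Γ σ b := by
  have := congrFun (pval_liftTrace Γ σ h) a
  rw [pval, hab, ← pval, congrFun (pval_liftTrace Γ σ h) b] at this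
  exact (Set.image_injective.mpr Sum.inl_injective this).symm

lemma wellFormed_liftTrace_iff {Γ : Set AP} {σ : ℕ → Set AP} {h : ℕ → Bool} :
    WellFormed Γ (liftTrace σ h) ↔
      ((∀ m, h m = false) ∧ IsStutterFact (pval Γ σ) id) ∨
      ∃ k, (∀ m, h m = true ↔ m = k + 1) ∧
        IsStutterFact (pval Γ σ) (natSuccAbove (k + 1)) := by
  have hpstfr : pstfr (Sum.inl '' Γ) (liftTrace σ h) = liftTrace σ h ∘ factPos (pval Γ σ) := by
    rw [← factPos_pval_liftTrace Γ σ h]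
    rfl
  have hskip : ∀ k, (fun m => if m ≤ k then liftTrace σ h m else liftTrace σ h (m + 1)) =
      liftTrace σ h ∘ natSuccAbove (k + 1) := fun k => by
    funext m
    simp only [Function.comp_apply, natSuccAbove, Nat.lt_add_one_iff]
    split_ifs <;> rfl
  simp only [WellFormed, hpstfr, hskip, hashP_mem_liftTrace, Bool.not_eq_true]
  refine or_congr (and_congr_right fun _ => ⟨fun heq => ?_, fun hid => ?_⟩)
    (exists_congr fun k => and_congr_right fun hk => ⟨fun heq => ?_, fun hsf => ?_⟩)
  · rw [← factPos_eq_of_apply_eq strictMono_id (fun m => ⟨_, rfl⟩)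
      fun m => pval_eq_of_liftTrace_eq (congrFun heq m)]
    exact isStutterFact_factPos _
  · rw [hid.factPos_eq]
    rfl
  · have hm : ∀ m, liftTrace σ h (factPos (pval Γ σ) m) =
        liftTrace σ h (natSuccAbove (k + 1) m) := congrFun heq
    have hrange : ∀ m, factPos (pval Γ σ) m ∈ Set.range (natSuccAbove (k + 1)) := fun m => by
      rw [mem_range_natSuccAbove, ne_eq, ← hk, ← hashP_mem_liftTrace (σ := σ), hm m,
        hashP_mem_liftTrace, hk]
      exact mem_range_natSuccAbove.mp ⟨m, rfl⟩
    rw [← factPos_eq_of_apply_eq (strictMono_natSuccAbove _) hrange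
      fun m => pval_eq_of_liftTrace_eq (hm m)]
    exact isStutterFact_factPos _
  · rw [hsf.factPos_eq]

lemma mem_stfrHash_iff {Γ : Set AP} {L : Set (ℕ → Set AP)} {τ : ℕ → Set (AP ⊕ Unit)} :
    τ ∈ stfrHash Γ L ↔ ∃ σ ∈ L,
      τ = liftTrace (pstfr Γ σ) (fun _ => false) ∨
      ∃ k i, factPos (pval Γ σ) k < i ∧ i < factPos (pval Γ σ) (k + 1) ∧
        τ = liftTrace (σ ∘ insertNth (k + 1) i (factPos (pval Γ σ))) (fun m => m = k + 1) := by
  have hpure : ∀ σ : ℕ → Set AP, (fun m => Sum.inl '' pstfr Γ σ m) =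
      liftTrace (pstfr Γ σ) (fun _ => false) := fun σ => by
    funext m
    simp [liftTrace]
  have hhash : ∀ (σ : ℕ → Set AP) (k i : ℕ), (fun m =>
      if m ≤ k then Sum.inl '' σ (factPos (pval Γ σ) m)
      else if m = k + 1 then insert hashP (Sum.inl '' σ i)
      else Sum.inl '' σ (factPos (pval Γ σ) (m - 1))) =
      liftTrace (σ ∘ insertNth (k + 1) i (factPos (pval Γ σ))) (fun m => m = k + 1) :=
    fun σ k i => by
      funext m
      simp only [liftTrace, insertNth, Function.comp_apply, decide_eq_true_eq,
        Nat.lt_add_one_iff]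
      split_ifs <;> first | omega | simp [Set.union_singleton]
  simp only [stfrHash, Set.mem_union, Set.mem_ofPred_eq, hpure, hhash]
  constructor
  · rintro (⟨σ, hσ, hτ⟩ | ⟨σ, hσ, hτ⟩)
    exacts [⟨σ, hσ, Or.inl hτ⟩, ⟨σ, hσ, Or.inr hτ⟩]
  · rintro ⟨σ, hσ, hτ | hτ⟩
    exacts [Or.inl ⟨σ, hσ, hτ⟩, Or.inr ⟨σ, hσ, hτ⟩]

lemma wellFormed_of_mem_stfrHash {Γ : Set AP} {L : Set (ℕ → Set AP)} {τ : ℕ → Set (AP ⊕ Unit)}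
    (hτ : τ ∈ stfrHash Γ L) : WellFormed Γ τ := by
  obtain ⟨σ, -, rfl | ⟨k, i, h1, h2, rfl⟩⟩ := mem_stfrHash_iff.mp hτ
  · exact wellFormed_liftTrace_iff.mpr
      (Or.inl ⟨fun _ => rfl, (isStutterFact_factPos (pval Γ σ)).comp_self⟩)
  · exact wellFormed_liftTrace_iff.mpr
      (Or.inr ⟨k, fun m => decide_eq_true_iff, (isStutterFact_factPos _).comp_insertNth h1 h2⟩)

end LiftTrace

/-- The body shared by `RGamma`, `RGammaF`, `RHash` and `RHashF`. -/
def Kripke.IsSegment {AP S : Type} (K : Kripke AP S) (Γ : Set AP) (s s' : S) (L : ℕ)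
    (ρ : ℕ → S) : Prop :=
  1 ≤ L ∧ ρ 0 = s ∧ ρ L = s' ∧ (∀ i < L, K.E (ρ i) (ρ (i + 1))) ∧
    ∀ i < L, K.lab (ρ i) ∩ Γ = K.lab s ∩ Γ

section Forward

variable {AP S : Type} {K : Kripke AP S} {F : Set S} {Γ : Set AP} {π : ℕ → S}

lemma isSegment_of_path (hπ : ∀ j, K.E (π j) (π (j + 1))) {a b : ℕ} (hab : a < b)
    (hconst : ∀ j, a ≤ j → j < b → K.lab (π j) ∩ Γ = K.lab (π a) ∩ Γ) :
    K.IsSegment Γ (π a) (π b) (b - a) fun t => π (a + t) :=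
  ⟨by omega, rfl, by dsimp only; rw [Nat.add_sub_cancel' hab.le], fun t _ => hπ (a + t),
    fun t ht => hconst _ (by omega) (by omega)⟩

lemma exists_visit_of_path {a b : ℕ} (h : ∃ j, a < j ∧ j ≤ b ∧ π j ∈ F) :
    ∃ t ≤ b - a, π (a + t) ∈ F := by
  obtain ⟨j, h1, h2, hj⟩ := h
  exact ⟨j - a, by omega, by rwa [Nat.add_sub_cancel' h1.le]⟩

lemma stutterKripke_E_of_change (hπ : ∀ j, K.E (π j) (π (j + 1))) {a b : ℕ} (hab : a < b)
    (hconst : ∀ j, a ≤ j → j < b → K.lab (π j) ∩ Γ = K.lab (π a) ∩ Γ)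
    (hchange : K.lab (π b) ∩ Γ ≠ K.lab (π a) ∩ Γ ∨ b = a + 1) (x : Bool × Bool) {c : Bool}
    (hc : c = true ↔ ∃ j, a < j ∧ j ≤ b ∧ π j ∈ F) :
    (stutterKripke K F Γ).E (π a, x) (π b, c, false) := by
  by_cases hstep : b = a + 1
  · subst hstep
    refine Or.inl ⟨Or.inl (hπ a), rfl,
      hc.trans ⟨fun ⟨j, h1, h2, hj⟩ => ?_, fun hb => ⟨_, hab, le_rfl, hb⟩⟩⟩
    rwa [show j = a + 1 by omega] at hj
  obtain ⟨h1, h2, h3, h4, h5⟩ := isSegment_of_path hπ hab hconst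
  have hne := Ne.symm (hchange.resolve_right hstep)
  cases c
  · refine Or.inl ⟨Or.inr ⟨hne, _, _, h1, h2, h3, h4, h5⟩, rfl, ?_⟩
    simpa using fun hb => hc.mpr ⟨b, hab, le_rfl, hb⟩
  · exact Or.inr (Or.inl
      ⟨⟨hne, _, _, h1, h2, h3, h4, h5, exists_visit_of_path (hc.mp rfl)⟩, rfl, rfl⟩)

lemma stutterKripke_E_hash (hπ : ∀ j, K.E (π j) (π (j + 1))) {a b : ℕ} (hab : a < b)
    (hconst : ∀ j, a ≤ j → j < b → K.lab (π j) ∩ Γ = K.lab (π a) ∩ Γ)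
    (heq : K.lab (π b) ∩ Γ = K.lab (π a) ∩ Γ) {x : Bool × Bool} (hx : x.2 = false) {c : Bool}
    (hc : c = true ↔ ∃ j, a < j ∧ j ≤ b ∧ π j ∈ F) :
    (stutterKripke K F Γ).E (π a, x) (π b, c, true) := by
  obtain ⟨h1, h2, h3, h4, h5⟩ := isSegment_of_path hπ hab hconst
  cases c
  · refine Or.inr (Or.inr (Or.inl ⟨⟨heq.symm, _, _, h1, h2, h3, h4, h5⟩, hx, rfl, ?_⟩))
    simpa using fun hb => hc.mpr ⟨b, hab, le_rfl, hb⟩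
  · exact Or.inr (Or.inr (Or.inr
      ⟨⟨heq.symm, _, _, h1, h2, h3, h4, h5, exists_visit_of_path (hc.mp rfl)⟩, hx, rfl, rfl⟩))

lemma liftTrace_mem_fairTraces (hπ : K.IsPath π) (hfair : {j | π j ∈ F}.Infinite)
    {q : ℕ → ℕ} (hq : StrictMono q) (hq0 : q 0 = 0) {h : ℕ → Bool} (h0 : h 0 = false)
    (hconst : ∀ m j, q m ≤ j → j < q (m + 1) → K.lab (π j) ∩ Γ = K.lab (π (q m)) ∩ Γ)
    (hhash : ∀ m, h (m + 1) = true →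
      h m = false ∧ K.lab (π (q (m + 1))) ∩ Γ = K.lab (π (q m)) ∩ Γ)
    (hchange : ∀ m, h (m + 1) = false →
      K.lab (π (q (m + 1))) ∩ Γ ≠ K.lab (π (q m)) ∩ Γ ∨ q (m + 1) = q m + 1) :
    liftTrace (fun m => K.lab (π (q m))) h ∈ (stutterKripke K F Γ).fairTraces stutterFair := by
  classical
  let acc : ℕ → Bool
    | 0 => false
    | m + 1 => decide (∃ j, q m < j ∧ j ≤ q (m + 1) ∧ π j ∈ F)
  have hacc : ∀ m, acc (m + 1) = true ↔ ∃ j, q m < j ∧ j ≤ q (m + 1) ∧ π j ∈ F :=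
    fun _ => decide_eq_true_iff
  have hinit : π (q 0) ∈ K.init := by rw [hq0]; exact hπ.1
  refine ⟨fun m => (π (q m), acc m, h m), ⟨⟨hinit, rfl, h0⟩, fun m => ?_⟩,
    Set.infinite_of_forall_exists_gt fun a => ?_, rfl⟩
  · show (stutterKripke K F Γ).E (π (q m), acc m, h m) (π (q (m + 1)), acc (m + 1), h (m + 1))
    cases hm : h (m + 1)
    · exact stutterKripke_E_of_change hπ.2 (hq (Nat.lt_add_one m)) (hconst m) (hchange m hm) _
        (hacc m)
    · obtain ⟨hprev, heq⟩ := hhash m hm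
      exact stutterKripke_E_hash hπ.2 (hq (Nat.lt_add_one m)) (hconst m) heq (x := (acc m, h m))
        hprev (hacc m)
  · obtain ⟨j, hj, hja⟩ := hfair.exists_gt (q a)
    obtain ⟨m, hm1, hm2⟩ := exists_block hq hq0 (j - 1)
    exact ⟨m + 1, (hacc m).mpr ⟨j, by omega, by omega, hj⟩, hq.lt_iff_lt.mp (by omega)⟩

lemma stutterTrace_mem_fairTraces {σ : ℕ → Set AP} (hσ : σ ∈ K.fairTraces F) :
    liftTrace (pstfr Γ σ) (fun _ => false) ∈ (stutterKripke K F Γ).fairTraces stutterFair := by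
  obtain ⟨π, hπ, hfair, rfl⟩ := hσ
  have hℓ := isStutterFact_factPos (pval Γ fun i => K.lab (π i))
  refine liftTrace_mem_fairTraces hπ hfair hℓ.strictMono hℓ.zero rfl hℓ.const
    (fun _ h => absurd h Bool.false_ne_true) fun m _ => ?_
  exact or_iff_not_imp_left.mpr fun h => (hℓ.stutter m (not_not.mp h)).1

lemma hashTrace_mem_fairTraces {σ : ℕ → Set AP} (hσ : σ ∈ K.fairTraces F) {k i : ℕ}
    (h1 : factPos (pval Γ σ) k < i) (h2 : i < factPos (pval Γ σ) (k + 1)) :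
    liftTrace (σ ∘ insertNth (k + 1) i (factPos (pval Γ σ))) (fun m => m = k + 1) ∈
      (stutterKripke K F Γ).fairTraces stutterFair := by
  obtain ⟨π, hπ, hfair, rfl⟩ := hσ
  have hℓ := isStutterFact_factPos (pval Γ fun i => K.lab (π i))
  set ℓ := factPos (pval Γ fun i => K.lab (π i))
  have hi : K.lab (π i) ∩ Γ = K.lab (π (ℓ k)) ∩ Γ := hℓ.const k i h1.le h2
  have hne : K.lab (π (ℓ (k + 1))) ∩ Γ ≠ K.lab (π (ℓ k)) ∩ Γ := hℓ.apply_succ_ne h1 h2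
  refine liftTrace_mem_fairTraces hπ hfair (hℓ.strictMono.insertNth h1 h2)
    ((insertNth_of_lt k.succ_pos).trans hℓ.zero) (by simp) (fun m j hj1 hj2 => ?_)
    (fun m hm => ?_) fun m hm => ?_
  · rcases insertNth_cases ℓ k i m with ⟨-, n, -, hm, hm'⟩ | ⟨-, hm, hm'⟩ | ⟨-, hm, hm'⟩ <;>
      rw [hm] at hj1 ⊢ <;> rw [hm'] at hj2
    · exact hℓ.const n j hj1 hj2
    · exact hℓ.const k j hj1 (hj2.trans h2)
    · exact (hℓ.const k j (h1.le.trans hj1) hj2).trans hi.symm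
  · obtain rfl : m = k := by simpa using hm
    simp only [insertNth_of_lt (Nat.lt_add_one m), insertNth_self]
    exact ⟨by simp, hi⟩
  · rcases insertNth_cases ℓ k i m with ⟨-, n, hnk, hm, hm'⟩ | ⟨rfl, -⟩ | ⟨-, hm, hm'⟩
    · rw [hm, hm']
      exact or_iff_not_imp_left.mpr fun h => (hℓ.stutter n (not_not.mp h)).1
    · simp at hm
    · rw [hm, hm', hi]
      exact Or.inl hne

end Forward

/-- `π` is obtained from the path `P` of `K_Γ` by replacing each of its edges with the segment
of `K` that the edge summarizes; `g m` is the position of `P m` in `π`. -/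
structure IsExpansion {AP S : Type} (K : Kripke AP S) (Γ : Set AP) (P : ℕ → S × Bool × Bool)
    (π : ℕ → S) (g : ℕ → ℕ) : Prop where
  strictMono : StrictMono g
  zero : g 0 = 0
  apply_eq : ∀ m, π (g m) = (P m).1
  val : ∀ m j, g m ≤ j → j < g (m + 1) → K.lab (π j) ∩ Γ = K.lab (P m).1 ∩ Γ
  step : ∀ m, (P (m + 1)).2.2 = false →
    K.lab (P (m + 1)).1 ∩ Γ = K.lab (P m).1 ∩ Γ → g (m + 1) = g m + 1

section Backward

variable {AP S : Type} {K : Kripke AP S} {F : Set S} {Γ : Set AP}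

lemma isSegment_of_E {s s' : S} (h : K.E s s') :
    K.IsSegment Γ s s' 1 fun t => if t = 0 then s else s' := by
  refine ⟨le_rfl, rfl, rfl, fun t ht => ?_, fun t ht => ?_⟩ <;> obtain rfl : t = 0 := by omega
  exacts [h, rfl]

lemma exists_isSegment_of_stutterKripke_E {x y : S × Bool × Bool}
    (h : (stutterKripke K F Γ).E x y) :
    ∃ L ρ, K.IsSegment Γ x.1 y.1 L ρ ∧ (y.2.1 = true → ∃ t ≤ L, ρ t ∈ F) ∧
      (y.2.2 = false → K.lab y.1 ∩ Γ = K.lab x.1 ∩ Γ → L = 1) := by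
  rcases h with ⟨hE | ⟨hne, L, ρ, hseg⟩, -, hacc⟩ |
    ⟨⟨hne, L, ρ, h1, h2, h3, h4, h5, hF⟩, -⟩ | ⟨⟨-, L, ρ, hseg⟩, -, hy, hacc⟩ |
    ⟨⟨-, L, ρ, h1, h2, h3, h4, h5, hF⟩, -, hy, -⟩
  · exact ⟨1, _, isSegment_of_E hE, fun ha => ⟨1, le_rfl, by simpa using hacc.mp ha⟩,
      fun _ _ => rfl⟩
  · exact ⟨L, ρ, hseg, fun ha => ⟨L, le_rfl, hseg.2.2.1 ▸ hacc.mp ha⟩,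
      fun _ heq => absurd heq.symm hne⟩
  · exact ⟨L, ρ, ⟨h1, h2, h3, h4, h5⟩, fun _ => hF, fun _ heq => absurd heq.symm hne⟩
  · exact ⟨L, ρ, hseg, fun ha => ⟨L, le_rfl, hseg.2.2.1 ▸ hacc.mp ha⟩, by simp [hy]⟩
  · exact ⟨L, ρ, ⟨h1, h2, h3, h4, h5⟩, fun _ => hF, by simp [hy]⟩

lemma exists_concat {L : ℕ → ℕ} (hL : ∀ m, 1 ≤ L m) (ρ : ℕ → ℕ → S) :
    ∃ (π : ℕ → S) (g : ℕ → ℕ), StrictMono g ∧ g 0 = 0 ∧ (∀ m, g (m + 1) = g m + L m) ∧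
      ∀ m t, t < L m → π (g m + t) = ρ m t := by
  set g : ℕ → ℕ := fun m => ∑ i ∈ Finset.range m, L i
  have hgs : ∀ m, g (m + 1) = g m + L m := fun m => Finset.sum_range_succ L m
  have hg : StrictMono g := strictMono_nat_of_lt_succ fun m => by
    rw [hgs]
    have := hL m
    omega
  have hg0 : g 0 = 0 := Finset.sum_range_zero L
  choose blk hblk using exists_block hg hg0
  refine ⟨fun j => ρ (blk j) (j - g (blk j)), g, hg, hg0, hgs, fun m t ht => ?_⟩
  obtain ⟨h1, h2⟩ := hblk (g m + t)
  have hm := hgs m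
  have hb1 : blk (g m + t) < m + 1 := hg.lt_iff_lt.mp (by omega)
  have hb2 : m < blk (g m + t) + 1 := hg.lt_iff_lt.mp (by omega)
  simp only [show blk (g m + t) = m by omega, Nat.add_sub_cancel_left]

lemma exists_isExpansion {P : ℕ → S × Bool × Bool} (hP : (stutterKripke K F Γ).IsPath P)
    (hfair : {m | P m ∈ stutterFair}.Infinite) :
    ∃ π g, K.IsPath π ∧ {j | π j ∈ F}.Infinite ∧ IsExpansion K Γ P π g := by
  choose L ρ hseg hvisit hlen using fun m => exists_isSegment_of_stutterKripke_E (hP.2 m)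
  obtain ⟨π, g, hg, hg0, hgs, hπ⟩ := exists_concat (fun m => (hseg m).1) ρ
  have hπρ : ∀ m t, t ≤ L m → π (g m + t) = ρ m t := fun m t ht => by
    rcases ht.lt_or_eq with ht | rfl
    · exact hπ m t ht
    · rw [← hgs, ← add_zero (g (m + 1)), hπ (m + 1) 0 (hseg _).1, (hseg _).2.1, (hseg m).2.2.1]
  have hstart : ∀ m, π (g m) = (P m).1 := fun m => (hπρ m 0 (Nat.zero_le _)).trans (hseg m).2.1
  have hinit : π 0 ∈ K.init := by rw [← hg0, hstart]; exact hP.1.1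
  refine ⟨π, g, ⟨hinit, fun j => ?_⟩,
    Set.infinite_of_forall_exists_gt fun a => ?_,
    ⟨hg, hg0, hstart, fun m j h1 h2 => ?_, fun m hm heq => by rw [hgs, hlen m hm heq]⟩⟩
  · obtain ⟨m, h1, h2⟩ := exists_block hg hg0 j
    have ht : j - g m < L m := by have := hgs m; omega
    obtain ⟨t, rfl⟩ : ∃ t, j = g m + t := ⟨j - g m, by omega⟩
    rw [add_assoc, hπρ m t (by omega), hπρ m (t + 1) (by omega)]
    exact (hseg m).2.2.2.1 t (by omega)
  · obtain ⟨_ | n, hn, han⟩ := hfair.exists_gt (a + 1)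
    · omega
    obtain ⟨t, ht, hF⟩ := hvisit n hn
    have : n ≤ g n := hg.id_le n
    exact ⟨g n + t, show π (g n + t) ∈ F by rwa [hπρ n t ht], by omega⟩
  · obtain ⟨t, rfl⟩ : ∃ t, j = g m + t := ⟨j - g m, by omega⟩
    have := hgs m
    rw [hπρ m t (by omega)]
    exact (hseg m).2.2.2.2 t (by omega)

lemma IsExpansion.isStutterFact {P : ℕ → S × Bool × Bool} {π : ℕ → S} {g f : ℕ → ℕ}
    (hexp : IsExpansion K Γ P π g) (hV : IsStutterFact (pval Γ fun m => K.lab (P m).1) f)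
    (hflag : ∀ n, (P (f (n + 1))).2.2 = false) :
    IsStutterFact (pval Γ fun j => K.lab (π j)) (g ∘ f) :=
  hV.expand hexp.strictMono hexp.zero hexp.val fun n heq => by
    have hsucc := (hV.stutter n heq).1
    exact hexp.step _ (hsucc ▸ hflag n) (hsucc ▸ heq)

lemma mem_stfrHash_of_mem_fairTraces {τ : ℕ → Set (AP ⊕ Unit)}
    (hτ : τ ∈ (stutterKripke K F Γ).fairTraces stutterFair) (hwf : WellFormed Γ τ) :
    τ ∈ stfrHash Γ (K.fairTraces F) := by
  obtain ⟨P, hP, hfair, rfl⟩ := hτ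
  obtain ⟨π, g, hπ, hπfair, hexp⟩ := exists_isExpansion hP hfair
  have hlift : (fun m => (stutterKripke K F Γ).lab (P m)) =
      liftTrace (fun m => K.lab (P m).1) fun m => (P m).2.2 := rfl
  have hlab : (fun m => K.lab (P m).1) = fun m => K.lab (π (g m)) :=
    funext fun m => by rw [hexp.apply_eq]
  rw [hlift, wellFormed_liftTrace_iff] at hwf
  rw [hlift, mem_stfrHash_iff]
  refine ⟨_, ⟨π, hπ, hπfair, rfl⟩, ?_⟩
  rcases hwf with ⟨hflags, hV⟩ | ⟨k, hflags, hV⟩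
  · have hℓ : factPos (pval Γ fun j => K.lab (π j)) = g :=
      (hexp.isStutterFact hV fun _ => hflags _).factPos_eq
    left
    rw [hlab, funext hflags]
    unfold pstfr
    rw [hℓ]
  · have hflag : ∀ n, (P (natSuccAbove (k + 1) n)).2.2 = false := fun n =>
      Bool.eq_false_iff.mpr fun h => mem_range_natSuccAbove.mp ⟨n, rfl⟩ ((hflags _).mp h)
    have hℓ : factPos (pval Γ fun j => K.lab (π j)) = g ∘ natSuccAbove (k + 1) :=
      (hexp.isStutterFact hV fun n => hflag (n + 1)).factPos_eq
    have hk : natSuccAbove (k + 1) k = k := if_pos (Nat.lt_add_one k)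
    have hk1 : natSuccAbove (k + 1) (k + 1) = k + 2 := if_neg (lt_irrefl _)
    right
    refine ⟨k, g (k + 1), ?_, ?_, ?_⟩
    · rw [hℓ, Function.comp_apply, hk]
      exact hexp.strictMono (Nat.lt_add_one k)
    · rw [hℓ, Function.comp_apply, hk1]
      exact hexp.strictMono (Nat.lt_add_one _)
    · rw [hℓ, insertNth_comp_natSuccAbove, hlab]
      congr 1
      funext m
      exact Bool.eq_iff_iff.mpr ((hflags m).trans decide_eq_true_iff.symm)

end Backward

theorem stutterKripke_correct_general {AP S : Type} (K : Kripke AP S) (F : Set S) (Γ : Set AP) :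
    stfrHash Γ (K.fairTraces F) ⊆ {τ | WellFormed Γ τ} ∧
    {τ | τ ∈ (stutterKripke K F Γ).fairTraces stutterFair ∧ WellFormed Γ τ} =
      stfrHash Γ (K.fairTraces F) := by
  have hwf : stfrHash Γ (K.fairTraces F) ⊆ {τ | WellFormed Γ τ} :=
    fun _ => wellFormed_of_mem_stfrHash
  refine ⟨hwf, Set.Subset.antisymm (fun τ hτ => mem_stfrHash_of_mem_fairTraces hτ.1 hτ.2)
    fun τ hτ => ⟨?_, hwf hτ⟩⟩
  obtain ⟨σ, hσ, rfl | ⟨k, i, h1, h2, rfl⟩⟩ := mem_stfrHash_iff.mp hτ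
  · exact stutterTrace_mem_fairTraces hσ
  · exact hashTrace_mem_fairTraces hσ h1 h2

/-- every trace of `stfr^#_Γ(Traces(K,F))` is well-formed, and the
well-formed traces of `(K_Γ, F_Γ)` are exactly `stfr^#_Γ(Traces(K,F))`. -/
theorem stutterKripke_correct {AP S : Type} [Finite S] (K : Kripke AP S)
    (htot : ∀ s, ∃ t, K.E s t) (F : Set S) (Γ : Set AP) (hΓ : Γ.Nonempty) :
    stfrHash Γ (K.fairTraces F) ⊆ {τ | WellFormed Γ τ} ∧
    {τ | τ ∈ (stutterKripke K F Γ).fairTraces stutterFair ∧ WellFormed Γ τ} =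
      stfrHash Γ (K.fairTraces F) :=
  stutterKripke_correct_general K F Γ
end

section
/- Global promptness as expressed by the simple GHyperLTL_{S+C} sentence ∃^P x.(q[x] ∧ ∀^P y.(q[y] → (¬p[x] U p[y]))) is correct: a set of traces L satisfies this sentence if and only if (i) every request is eventually answered — for every trace σ ∈ L and position j with q ∈ σ(j) there is m ≥ j with p ∈ σ(m) — and (ii) there is a uniform bound: there exist σ₀ ∈ L and i₀ with q ∈ σ₀(i₀) such that, letting h be the least h ≥ 0 with p ∈ σ₀(i₀+h), every request (σ,j) with q ∈ σ(j), σ ∈ L, has a response within h steps (p ∈ σ(j+k) for some k ≤ h). -/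
/-- correctness of the simple GHyperLTL_{S+C} sentence
`∃^P x.(q[x] ∧ ∀^P y.(q[y] → (¬p[x] U p[y])))` for global promptness.  The left-hand side
unfolds the semantics of the sentence: there are a trace `σ₀ ∈ L` and a position `i₀` with
a request `q` such that every request `(σ,j)` over `L` gets a response `p` at `σ(j+k)` for
some `k` with no response occurring in `σ₀` on `[i₀, i₀+k)`.  The right-hand side states:
(i) every request is eventually answered, and (ii) there is a pointed request `(σ₀,i₀)`
whose least response time `h` uniformly bounds the response time of every request. -/
theorem global_promptness_correct {AP : Type} (p q : AP) (L : Set (ℕ → Set AP)) :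
    (∃ σ₀ ∈ L, ∃ i₀ : ℕ, q ∈ σ₀ i₀ ∧
      ∀ σ ∈ L, ∀ j : ℕ, q ∈ σ j →
        ∃ k : ℕ, p ∈ σ (j + k) ∧ ∀ m < k, p ∉ σ₀ (i₀ + m))
    ↔
    ((∀ σ ∈ L, ∀ j : ℕ, q ∈ σ j → ∃ m : ℕ, j ≤ m ∧ p ∈ σ m) ∧
     (∃ σ₀ ∈ L, ∃ i₀ : ℕ, q ∈ σ₀ i₀ ∧
       ∃ h : ℕ, (p ∈ σ₀ (i₀ + h) ∧ ∀ m < h, p ∉ σ₀ (i₀ + m)) ∧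
         ∀ σ ∈ L, ∀ j : ℕ, q ∈ σ j → ∃ k ≤ h, p ∈ σ (j + k))) := by
  constructor
  · rintro ⟨σ₀, hσ₀, i₀, hq₀, H⟩
    constructor
    · intro σ hσ j hq
      obtain ⟨k, hk, -⟩ := H σ hσ j hq
      exact ⟨j + k, Nat.le_add_right _ _, hk⟩
    · classical
      obtain ⟨k₀, hk₀, -⟩ := H σ₀ hσ₀ i₀ hq₀
      have hex : ∃ n, p ∈ σ₀ (i₀ + n) := ⟨k₀, hk₀⟩
      set h := Nat.find hex with hh
      refine ⟨σ₀, hσ₀, i₀, hq₀, h, ⟨Nat.find_spec hex, fun m hm => Nat.find_min hex hm⟩, ?_⟩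
      intro σ hσ j hq
      obtain ⟨k, hk, hmin⟩ := H σ hσ j hq
      refine ⟨k, ?_, hk⟩
      by_contra hlt
      exact hmin h (lt_of_not_ge hlt) (Nat.find_spec hex)
  · rintro ⟨-, σ₀, hσ₀, i₀, hq₀, h, ⟨hp, hmin⟩, H⟩
    refine ⟨σ₀, hσ₀, i₀, hq₀, fun σ hσ j hq => ?_⟩
    obtain ⟨k, hkh, hk⟩ := H σ hσ j hq
    exact ⟨k, hk, fun m hm => hmin m (lt_of_lt_of_le hm hkh)⟩
end
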